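/- The presented group G₁ = ⟨a, b | a*b*a = b*a*b, a^2 = b*a^2*b, a^4 = 1⟩ is isomorphic to the symmetric group S₄ (the group of permutations of a four-element set). -/

import Mathlib

/-- The three relators of the presentation
`⟨a, b | a*b*a = b*a*b, a^2 = b*a^2*b, a^4 = 1⟩`, as elements of the free group
on two generators `a = FreeGroup.of 0`, `b = FreeGroup.of 1`. -/
def rotOctahedralRels : Set (FreeGroup (Fin 2)) :=
  { (FreeGroup.of 0 * FreeGroup.of 1 * FreeGroup.of 0) *
      (FreeGroup.of 1 * FreeGroup.of 0 * FreeGroup.of 1)⁻¹,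
    (FreeGroup.of 0) ^ 2 * (FreeGroup.of 1 * (FreeGroup.of 0) ^ 2 * FreeGroup.of 1)⁻¹,
    (FreeGroup.of 0) ^ 4 }

/-!
Sending `a ↦ (0 1 2 3)` and `b ↦ (0 1 3 2)` respects the relations, and `a²b` goes to the
transposition `(3 0)`, so this defines a surjection `G₁ → S₄`. Conversely, a coset enumeration over
`⟨a⟩` bounds `G₁`: the six elements `T = {1, b, ba, b², ba², ba³}` satisfy `Ta, Tb ⊆ ⟨a⟩T`, so the
finite set `⟨a⟩T`, of size at most `4 · 6`, is closed under right multiplication by the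
generators and hence is all of `G₁`. A surjection onto a group of order `24` from a group of
order at most `24` is an isomorphism.
-/

open Subgroup Pointwise

theorem Subgroup.closure_subset_of_finite_of_mul_mem {G : Type*} [Group G] {s S : Set G}
    (hS : S.Finite) (h1 : 1 ∈ S) (hmul : ∀ g ∈ S, ∀ t ∈ s, g * t ∈ S) :
    (closure s : Set G) ⊆ S := by
  -- right multiplication by `t` maps the finite set `S` injectively into itself, hence onto it
  have hmul_inv : ∀ g ∈ S, ∀ t ∈ s, g * t⁻¹ ∈ S := by
    intro g hg t ht
    have hmaps : Set.MapsTo (· * t) S S := fun g hg => hmul g hg t ht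
    obtain ⟨g', hg', rfl⟩ :=
      ((hS.injOn_iff_bijOn_of_mapsTo hmaps).mp (mul_left_injective t).injOn).surjOn hg
    simpa using hg'
  intro g hg
  induction hg using closure_induction_right with
  | one => exact h1
  | mul_right g _ t ht hg => exact hmul g hg t ht
  | mul_inv_cancel g _ t ht hg => exact hmul_inv g hg t ht

theorem Subgroup.closure_subset_mul_of_mul_mem {G : Type*} [Group G] {H : Subgroup G}
    {s T : Set G} (hfin : ((H : Set G) * T).Finite) (h1 : 1 ∈ T)
    (hT : ∀ t ∈ T, ∀ g ∈ s, t * g ∈ (H : Set G) * T) :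
    (closure s : Set G) ⊆ (H : Set G) * T := by
  refine closure_subset_of_finite_of_mul_mem hfin ⟨1, H.one_mem, 1, h1, one_mul 1⟩ ?_
  rintro _ ⟨h, hh, t, ht, rfl⟩ g hg
  obtain ⟨h', hh', t', ht', htg⟩ := hT t ht g hg
  refine ⟨h * h', H.mul_mem hh hh', t', ht', ?_⟩
  simp only at htg ⊢
  rw [mul_assoc, htg, mul_assoc]

namespace RotOctahedral

section Relations

variable {G : Type*} [Group G] {a b : G}

theorem inv_eq_pow_three (h4 : a ^ 4 = 1) : a⁻¹ = a ^ 3 :=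
  inv_eq_of_mul_eq_one_left (by rw [← pow_succ, h4])

theorem b_mul_sq_eq_sq_mul_inv (hsq : a ^ 2 = b * a ^ 2 * b) : b * a ^ 2 = a ^ 2 * b⁻¹ :=
  eq_mul_inv_of_mul_eq hsq.symm

theorem b_inv_eq_sq_mul_mul_sq (hsq : a ^ 2 = b * a ^ 2 * b) (h4 : a ^ 4 = 1) :
    b⁻¹ = a ^ 2 * b * a ^ 2 := by
  refine inv_eq_of_mul_eq_one_right ?_
  calc b * (a ^ 2 * b * a ^ 2) = (b * a ^ 2 * b) * a ^ 2 := by group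
    _ = 1 := by rw [← hsq, ← pow_add, h4]

theorem b_pow_four (braid : a * b * a = b * a * b) (h4 : a ^ 4 = 1) : b ^ 4 = 1 := by
  have hconj : (a * b) * a * (a * b)⁻¹ = b := by rw [braid]; group
  rw [← hconj, conj_pow, h4]; group

theorem b_pow_three (braid : a * b * a = b * a * b) (hsq : a ^ 2 = b * a ^ 2 * b)
    (h4 : a ^ 4 = 1) : b ^ 3 = a ^ 2 * (b * a ^ 2) := by
  rw [← mul_assoc, ← b_inv_eq_sq_mul_mul_sq hsq h4, eq_inv_iff_mul_eq_one, ← pow_succ,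
    b_pow_four braid h4]

theorem b_mul_cube_mul_b (braid : a * b * a = b * a * b) (hsq : a ^ 2 = b * a ^ 2 * b)
    (h4 : a ^ 4 = 1) : b * a ^ 3 * b = a ^ 3 * (b * a ^ 3) := by
  calc b * a ^ 3 * b = b * a ^ 2 * (a * b * a) * a⁻¹ := by group
    _ = a ^ 2 * b⁻¹ * (b * a * b) * a⁻¹ := by rw [braid, b_mul_sq_eq_sq_mul_inv hsq]
    _ = a ^ 3 * (b * a⁻¹) := by group
    _ = a ^ 3 * (b * a ^ 3) := by rw [inv_eq_pow_three h4]

theorem b_sq_mul_a (braid : a * b * a = b * a * b) (hsq : a ^ 2 = b * a ^ 2 * b)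
    (h4 : a ^ 4 = 1) : b ^ 2 * a = a ^ 3 * b ^ 2 := by
  calc b ^ 2 * a = b * a⁻¹ * (a * b * a) := by rw [sq]; group
    _ = b * a ^ 3 * b * (a * b) := by rw [braid, inv_eq_pow_three h4]; group
    _ = a ^ 3 * b * a ^ 4 * b := by rw [b_mul_cube_mul_b braid hsq h4]; group
    _ = a ^ 3 * b ^ 2 := by rw [h4, sq]; group

def transversal (a b : G) : Set G := {1, b, b * a, b ^ 2, b * a ^ 2, b * a ^ 3}

theorem transversal_mul_mem (braid : a * b * a = b * a * b) (hsq : a ^ 2 = b * a ^ 2 * b)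
    (h4 : a ^ 4 = 1) :
    ∀ t ∈ transversal a b, ∀ g ∈ ({a, b} : Set G),
      t * g ∈ (zpowers a : Set G) * transversal a b := by
  have mem (k : ℕ) (t : G) {g : G} (ht : t ∈ transversal a b) (hg : g = a ^ k * t) :
      g ∈ (zpowers a : Set G) * transversal a b :=
    ⟨a ^ k, pow_mem (mem_zpowers a) k, t, ht, hg.symm⟩
  simp only [transversal, Set.forall_mem_insert, Set.mem_singleton_iff, forall_eq]
  and_intros
  · exact mem 1 1 (by simp [transversal]) (by group)
  · exact mem 0 b (by simp [transversal]) (by group)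
  · exact mem 0 (b * a) (by simp [transversal]) (by group)
  · exact mem 0 (b ^ 2) (by simp [transversal]) (by rw [pow_zero, one_mul, sq])
  · exact mem 0 (b * a ^ 2) (by simp [transversal]) (by rw [pow_zero, one_mul, sq, mul_assoc])
  · exact mem 1 (b * a) (by simp [transversal]) (by rw [← braid]; group)
  · exact mem 3 (b ^ 2) (by simp [transversal]) (b_sq_mul_a braid hsq h4)
  · exact mem 2 (b * a ^ 2) (by simp [transversal])
      (by rw [← pow_succ, b_pow_three braid hsq h4])
  · exact mem 0 (b * a ^ 3) (by simp [transversal]) (by group)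
  · exact mem 2 1 (by simp [transversal]) (by rw [← hsq, mul_one])
  · exact mem 0 b (by simp [transversal])
      (by rw [mul_assoc, ← pow_succ, h4, mul_one, pow_zero, one_mul])
  · exact mem 3 (b * a ^ 3) (by simp [transversal]) (b_mul_cube_mul_b braid hsq h4)

theorem natCard_transversal_le : Nat.card (transversal a b) ≤ 6 := by
  classical
  have : transversal a b = ↑({1, b, b * a, b ^ 2, b * a ^ 2, b * a ^ 3} : Finset G) := by
    simp [transversal]
  rw [this, Nat.card_coe_set_eq, Set.ncard_coe_finset]
  exact Finset.card_le_six

theorem finite_zpowers_mul_transversal (h4 : a ^ 4 = 1) :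
    ((zpowers a : Set G) * transversal a b).Finite :=
  (finite_zpowers.mpr (isOfFinOrder_iff_pow_eq_one.mpr ⟨4, by norm_num, h4⟩)).mul
    (by simp [transversal])

theorem natCard_zpowers_mul_transversal_le (h4 : a ^ 4 = 1) :
    Nat.card ((zpowers a : Set G) * transversal a b) ≤ 24 :=
  calc _ ≤ Nat.card (zpowers a) * Nat.card (transversal a b) := Set.natCard_mul_le
    _ ≤ 4 * 6 := by
      gcongr
      · exact Nat.card_zpowers a ▸ orderOf_le_of_pow_eq_one (by norm_num) h4
      · exact natCard_transversal_le

theorem closure_subset_zpowers_mul_transversal (braid : a * b * a = b * a * b)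
    (hsq : a ^ 2 = b * a ^ 2 * b) (h4 : a ^ 4 = 1) :
    (closure {a, b} : Set G) ⊆ (zpowers a : Set G) * transversal a b :=
  closure_subset_mul_of_mul_mem (finite_zpowers_mul_transversal h4) (by simp [transversal])
    (transversal_mul_mem braid hsq h4)

end Relations

local notation "G₁" => PresentedGroup rotOctahedralRels

open PresentedGroup

theorem of_braid : (of 0 : G₁) * of 1 * of 0 = of 1 * of 0 * of 1 :=
  mk_eq_mk_of_mul_inv_mem (Set.mem_insert _ _)

theorem of_sq : (of 0 : G₁) ^ 2 = of 1 * of 0 ^ 2 * of 1 :=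
  mk_eq_mk_of_mul_inv_mem (Set.mem_insert_of_mem _ (Set.mem_insert _ _))

theorem of_pow_four : (of 0 : G₁) ^ 4 = 1 :=
  one_of_mem (by simp [rotOctahedralRels])

theorem closure_of_eq_top : closure {(of 0 : G₁), of 1} = ⊤ := by
  rw [← closure_range_of]
  congr 1
  ext g
  simp [Fin.exists_fin_two, eq_comm]

theorem zpowers_mul_transversal_eq_univ :
    (zpowers (of 0 : G₁) : Set G₁) * transversal (of 0) (of 1) = Set.univ :=
  Set.eq_univ_of_univ_subset <| by
    simpa [closure_of_eq_top] using
      closure_subset_zpowers_mul_transversal of_braid of_sq of_pow_four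

instance finite : Finite G₁ :=
  Set.finite_univ_iff.mp <|
    zpowers_mul_transversal_eq_univ ▸ finite_zpowers_mul_transversal of_pow_four

theorem natCard_le : Nat.card G₁ ≤ 24 := by
  rw [← Nat.card_univ, ← zpowers_mul_transversal_eq_univ]
  exact natCard_zpowers_mul_transversal_le of_pow_four

def toPerm : G₁ →* Equiv.Perm (Fin 4) :=
  toGroup (f := ![finRotate 4, c[0, 1, 3, 2]]) <| by
    simp only [rotOctahedralRels, Set.mem_insert_iff, Set.mem_singleton_iff]
    rintro r (rfl | rfl | rfl) <;> decide

theorem toPerm_surjective : Function.Surjective toPerm := by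
  rw [← MonoidHom.range_eq_top, eq_top_iff, ← Equiv.Perm.closure_cycle_adjacent_swap
    (isCycle_finRotate (n := 2)) support_finRotate 3, closure_le]
  rintro _ (rfl | rfl)
  · exact ⟨of 0, toGroup.of _⟩
  · exact ⟨of 0 ^ 2 * of 1, by simp only [map_mul, map_pow, toPerm, toGroup.of]; decide⟩

end RotOctahedral

theorem stmt_6 :
    Nonempty (PresentedGroup rotOctahedralRels ≃* Equiv.Perm (Fin 4)) :=
  ⟨MulEquiv.ofBijective RotOctahedral.toPerm <|
    RotOctahedral.toPerm_surjective.bijective_of_nat_card_le <|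
      RotOctahedral.natCard_le.trans (by simp [Fintype.card_perm, Nat.factorial])⟩
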